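/- arXiv:2604.00365 — 3 statements merged into one kernel-verified Lean document; each statement's English description precedes it below -/
import Mathlib

section
/- For v = (v_0, v_r) in R × R^{m-1} with v_0 = ‖v_r‖ > 0 (i.e., v on the nonzero boundary of the second-order cone), the intersection of the second-order cone Q_m with the orthogonal complement of v equals the ray {t·(-v_0, v_r) : t ≤ 0}. -/
open scoped RealInnerProductSpace

noncomputable section

/-- The "tail" `y_r` of a vector `y = (y_0, y_r) ∈ ℝ × ℝ^d`. -/
def tail {d : ℕ} (y : EuclideanSpace ℝ (Fin (d+1))) : EuclideanSpace ℝ (Fin d) :=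
  WithLp.toLp 2 (fun i : Fin d => y i.succ)

/-- The second-order (Lorentz) cone `Q_{d+1} = {(y_0, y_r) : ‖y_r‖ ≤ y_0}`. -/
def SOC (d : ℕ) : Set (EuclideanSpace ℝ (Fin (d+1))) := {y | ‖tail y‖ ≤ y 0}

/-- `x̃ = (-x_0, x_r)`. -/
def tilde {d : ℕ} (x : EuclideanSpace ℝ (Fin (d+1))) : EuclideanSpace ℝ (Fin (d+1)) :=
  WithLp.toLp 2 (fun i : Fin (d+1) => if i = 0 then -(x 0) else x i)

lemma inner_split {d : ℕ} (u v : EuclideanSpace ℝ (Fin (d+1))) :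
    ⟪u, v⟫ = u 0 * v 0 + ⟪tail u, tail v⟫ := by
  simp [PiLp.inner_apply, Fin.sum_univ_succ, tail, RCLike.inner_apply]
  ring

theorem soc_inter_perp (d : ℕ) (v : EuclideanSpace ℝ (Fin (d+1)))
    (hv : v 0 = ‖tail v‖) (hpos : 0 < v 0) :
    SOC d ∩ {u | ⟪u, v⟫ = (0:ℝ)} = {u | ∃ t : ℝ, t ≤ 0 ∧ u = t • tilde v} := by
  ext u
  constructor
  · rintro ⟨hsoc, hperp⟩
    simp only [Set.mem_setOf_eq] at hsoc hperp ⊢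
    rw [inner_split] at hperp
    have hur : 0 ≤ u 0 := le_trans (norm_nonneg _) hsoc
    -- Cauchy-Schwarz forces equality
    have hcs : -(‖tail u‖ * ‖tail v‖) ≤ ⟪tail u, tail v⟫ :=
      neg_le_of_abs_le (abs_real_inner_le_norm _ _)
    have hle : ⟪tail u, tail v⟫ = -(u 0 * v 0) := by linarith
    have hsoc' : ‖tail u‖ ≤ u 0 := hsoc
    have hge : ‖tail u‖ * ‖tail v‖ ≤ u 0 * v 0 := by nlinarith [norm_nonneg (tail u)]
    have heq : ⟪tail u, tail v⟫ = -(‖tail u‖ * ‖tail v‖) := by linarith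
    have hu0 : u 0 = ‖tail u‖ := by
      have : u 0 * v 0 = ‖tail u‖ * ‖tail v‖ := by linarith
      rw [← hv] at this
      exact mul_right_cancel₀ (ne_of_gt hpos) this
    -- equality case
    have heq' : ⟪tail u, -(tail v)⟫ = ‖tail u‖ * ‖-(tail v)‖ := by
      rw [inner_neg_right, norm_neg, heq]; ring
    have hpar : ‖-(tail v)‖ • tail u = ‖tail u‖ • (-(tail v)) :=
      (inner_eq_norm_mul_iff_real).mp heq'
    rw [norm_neg] at hpar
    refine ⟨-(‖tail u‖) / v 0, div_nonpos_of_nonpos_of_nonneg (neg_nonpos.mpr (norm_nonneg _)) hpos.le, ?_⟩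
    ext i
    have hvr : ‖tail v‖ = v 0 := hv.symm
    refine Fin.cases ?_ ?_ i
    · show u 0 = (-(‖tail u‖) / v 0) * tilde v 0
      simp only [tilde, WithLp.ofLp_toLp, if_pos rfl, ↓reduceIte]
      field_simp
      rw [hu0]
    · intro j
      show u j.succ = (-(‖tail u‖) / v 0) * tilde v j.succ
      have hj : (j.succ : Fin (d+1)) ≠ 0 := Fin.succ_ne_zero j
      simp only [tilde, WithLp.ofLp_toLp, if_neg hj]
      have := congrFun (congrArg WithLp.ofLp hpar) j
      simp only [PiLp.smul_apply, smul_eq_mul, PiLp.neg_apply] at this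
      rw [hvr] at this
      have hu : u j.succ = tail u j := rfl
      have hvj : v j.succ = tail v j := rfl
      rw [hu, hvj]
      field_simp
      linarith
  · rintro ⟨t, ht, rfl⟩
    have htail : tail (t • tilde v) = t • tail v := by
      ext j
      have hj : (j.succ : Fin (d+1)) ≠ 0 := Fin.succ_ne_zero j
      simp [tail, tilde, hj]
    have h0 : (t • tilde v) 0 = -t * v 0 := by
      simp [tilde]
    constructor
    · show ‖tail (t • tilde v)‖ ≤ (t • tilde v) 0
      rw [htail, h0, norm_smul, ← hv, Real.norm_eq_abs, abs_of_nonpos ht]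
    · show ⟪t • tilde v, v⟫ = (0:ℝ)
      rw [inner_split, htail, h0, real_inner_smul_left,
        real_inner_self_eq_norm_sq, ← hv]
      ring
end
end

section
/- Let A : R^n → R^m be a nonzero linear map with Im(A) ∩ Q_m = R_+·(1,1,0) where m = 3, taking for concreteness A(x_1,x_2) = (x_1, x_1, x_2), and let x̄ = 0. Then the set A*[N_{Q_3}(0)] = A*[-Q_3] = {(-(y_0+y_1), -y_2) : y_0 ≥ √(y_1²+y_2²)} is not closed in R². -/
open scoped RealInnerProductSpace

noncomputable section

/-- The explicit image set `{(-(y_0+y_1), -y_2) : y_0 ≥ √(y_1²+y_2²)}`. -/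
def S11 : Set (EuclideanSpace ℝ (Fin 2)) :=
  {p | ∃ y : EuclideanSpace ℝ (Fin 3), y ∈ SOC 2 ∧ p 0 = -(y 0 + y 1) ∧ p 1 = -(y 2)}

lemma adjoint_apply (y : EuclideanSpace ℝ (Fin 3)) (i : Fin 2) :
    (LinearMap.adjoint (Matrix.toEuclideanLin (!![1,0;1,0;0,1] : Matrix (Fin 3) (Fin 2) ℝ))) y i
    = if i = 0 then y 0 + y 1 else y 2 := by
  rw [← Matrix.toEuclideanLin_conjTranspose_eq_adjoint, Matrix.toEuclideanLin_apply]
  fin_cases i <;>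
    simp [Matrix.mulVec, dotProduct, Fin.sum_univ_three, Matrix.conjTranspose_apply,
      Matrix.vecHead, Matrix.vecTail, Matrix.transpose_apply]

lemma norm_tail (y : EuclideanSpace ℝ (Fin 3)) :
    ‖tail y‖ = Real.sqrt ((y 1)^2 + (y 2)^2) := by
  rw [EuclideanSpace.norm_eq]
  simp [tail, Fin.sum_univ_two, Real.norm_eq_abs, sq_abs]

lemma mem_SOC_iff (y : EuclideanSpace ℝ (Fin 3)) :
    y ∈ SOC 2 ↔ Real.sqrt ((y 1)^2 + (y 2)^2) ≤ y 0 := by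
  rw [SOC, Set.mem_setOf_eq, norm_tail]

/-- The witness vector for `p = (-ε, 1)`. -/
def wit (ε : ℝ) : EuclideanSpace ℝ (Fin 3) :=
  WithLp.toLp 2 (fun i : Fin 3 => if i = 0 then (ε + 1/ε)/2 else if i = 1 then (ε - 1/ε)/2 else -1)

lemma wit_mem (ε : ℝ) (hε : 0 < ε) :
    (WithLp.toLp 2 (fun i : Fin 2 => if i = 0 then -ε else 1) : EuclideanSpace ℝ (Fin 2)) ∈ S11 := by
  refine ⟨wit ε, ?_, ?_, ?_⟩
  · rw [mem_SOC_iff]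
    have h0 : (wit ε) 0 = (ε + 1/ε)/2 := rfl
    have h1 : (wit ε) 1 = (ε - 1/ε)/2 := rfl
    have h2 : (wit ε) 2 = -1 := rfl
    rw [h0, h1, h2]
    have hsq : ((ε - 1/ε)/2)^2 + (-1:ℝ)^2 = ((ε + 1/ε)/2)^2 := by
      field_simp; ring
    rw [hsq, Real.sqrt_sq (by positivity)]
  · show -ε = -((wit ε) 0 + (wit ε) 1)
    show -ε = -((ε + 1/ε)/2 + (ε - 1/ε)/2)
    ring
  · show (1:ℝ) = -((wit ε) 2)
    norm_num [show (wit ε) 2 = -1 from rfl]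

lemma limit_not_mem :
    (WithLp.toLp 2 (fun i : Fin 2 => if i = 0 then (0:ℝ) else 1) : EuclideanSpace ℝ (Fin 2)) ∉ S11 := by
  rintro ⟨y, hy, h0, h1⟩
  rw [mem_SOC_iff] at hy
  norm_num at h0
  have h1' : (1:ℝ) = -(y 2) := by simpa using h1
  have hy2 : y 2 = -1 := by linarith
  have h0' : y 0 = -(y 1) := by linarith
  have hnn : 0 ≤ (y 1)^2 + (y 2)^2 := by positivity
  nlinarith [Real.sq_sqrt hnn, Real.sqrt_nonneg ((y 1)^2 + (y 2)^2)]

theorem adjoint_image_not_closed :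
    ⇑(LinearMap.adjoint
        (Matrix.toEuclideanLin (!![1,0;1,0;0,1] : Matrix (Fin 3) (Fin 2) ℝ)))
      '' {y : EuclideanSpace ℝ (Fin 3) | -y ∈ SOC 2} = S11 ∧
    ¬ IsClosed S11 := by
  constructor
  · ext p
    constructor
    · rintro ⟨y, hy, rfl⟩
      exact ⟨-y, hy, by simp [adjoint_apply]; ring, by simp [adjoint_apply]⟩
    · rintro ⟨z, hz, h0, h1⟩
      refine ⟨-z, by simpa using hz, ?_⟩
      ext i
      rw [adjoint_apply]
      fin_cases i
      · simp only [if_pos rfl, PiLp.neg_apply]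
        have h0' := h0; simp at h0' ⊢; linarith
      · simp only [PiLp.neg_apply]
        have h1' := h1; simp at h1' ⊢; linarith
  · intro hcl
    set q : EuclideanSpace ℝ (Fin 2) := WithLp.toLp 2 (fun i : Fin 2 => if i = 0 then (0:ℝ) else 1) with hq
    have hqmem : q ∈ S11 := by
      set g : ℝ → EuclideanSpace ℝ (Fin 2) :=
        fun t => q + t • EuclideanSpace.single (0 : Fin 2) (1:ℝ) with hg
      have hgform : ∀ t : ℝ, g t = WithLp.toLp 2 (fun i : Fin 2 => if i = 0 then t else 1) := by
        intro t
        ext i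
        fin_cases i <;> simp [hg, hq, EuclideanSpace.single_apply]
      have hgc : Continuous g := by
        apply continuous_const.add
        exact (continuous_id.smul continuous_const)
      have htend : Filter.Tendsto (fun n : ℕ => g (-(1/(n+1)))) Filter.atTop (nhds q) := by
        have h1 : Filter.Tendsto (fun n : ℕ => -(1/(n+1) : ℝ)) Filter.atTop (nhds 0) := by
          simpa using (tendsto_one_div_add_atTop_nhds_zero_nat (𝕜 := ℝ)).neg
        have := (hgc.tendsto 0).comp h1
        have hq0 : g 0 = q := by simp [hg]
        rw [← hq0]
        exact this
      have hmem : ∀ n : ℕ, g (-(1/(n+1))) ∈ S11 := by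
        intro n
        rw [hgform]
        exact wit_mem (1/(n+1)) (by positivity)
      exact hcl.mem_of_tendsto htend (Filter.Eventually.of_forall hmem)
    exact limit_not_mem hqmem
end
end

section
/- Let Im(A) be a linear subspace of R^m with 0 ∈ Im(A) ∩ Q_m. Then exactly one of the following holds: (a) Im(A) ∩ int(Q_m) ≠ ∅; (b) Im(A) ∩ Q_m = {0}; (c) Im(A) ∩ Q_m = R_+·v for some v ∈ bd⁺(Q_m). -/
open scoped RealInnerProductSpace

noncomputable section

lemma tail_add {d : ℕ} (x y : EuclideanSpace ℝ (Fin (d+1))) : tail (x + y) = tail x + tail y := by ext i; rfl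
lemma tail_smul {d : ℕ} (t : ℝ) (x : EuclideanSpace ℝ (Fin (d+1))) : tail (t • x) = t • tail x := by ext i; rfl

def tailLM (d : ℕ) : EuclideanSpace ℝ (Fin (d+1)) →ₗ[ℝ] EuclideanSpace ℝ (Fin d) where
  toFun := tail
  map_add' := tail_add
  map_smul' := tail_smul

def projLM (d : ℕ) : EuclideanSpace ℝ (Fin (d+1)) →ₗ[ℝ] ℝ where
  toFun := fun y => y 0
  map_add' := fun _ _ => rfl
  map_smul' := fun _ _ => rfl

lemma cont_tail (d : ℕ) : Continuous (@tail d) := (tailLM d).continuous_of_finiteDimensional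
lemma cont_proj (d : ℕ) : Continuous (fun y : EuclideanSpace ℝ (Fin (d+1)) => y 0) :=
  (projLM d).continuous_of_finiteDimensional

lemma interior_SOC (d : ℕ) : interior (SOC d) = {y | ‖tail y‖ < y 0} := by
  apply Set.Subset.antisymm
  · intro x hx
    have hxS : x ∈ SOC d := interior_subset hx
    simp only [Set.mem_setOf_eq]
    have hxS' : ‖tail x‖ ≤ x 0 := hxS
    rcases lt_or_eq_of_le hxS' with h | heq
    · exact h
    exfalso
    obtain ⟨ε, hε, hball⟩ := Metric.mem_nhds_iff.1 (mem_interior_iff_mem_nhds.1 hx)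
    set x' : EuclideanSpace ℝ (Fin (d+1)) := x - (ε/2) • EuclideanSpace.single 0 1 with hx'
    have htail : tail x' = tail x := by
      ext i
      show x' i.succ = x i.succ
      rw [hx']
      simp [EuclideanSpace.single_apply, Fin.succ_ne_zero i]
    have hx'0 : x' 0 = x 0 - ε/2 := by
      rw [hx']; simp [EuclideanSpace.single_apply]
    have hd : dist x' x < ε := by
      rw [hx']
      simp only [dist_eq_norm, sub_sub_cancel_left, norm_neg, norm_smul,
        EuclideanSpace.norm_single, Real.norm_eq_abs, norm_one, mul_one]
      rw [abs_of_pos (by linarith)]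
      linarith
    have hx'S : x' ∈ SOC d := hball (Metric.mem_ball.2 hd)
    have : ‖tail x‖ ≤ x 0 - ε/2 := by
      have := hx'S
      rwa [SOC, Set.mem_setOf_eq, htail, hx'0] at this
    linarith
  · have hopen : IsOpen {y : EuclideanSpace ℝ (Fin (d+1)) | ‖tail y‖ < y 0} :=
      isOpen_lt ((cont_tail d).norm) (cont_proj d)
    exact interior_maximal (fun y (hy : ‖tail y‖ < y 0) => (le_of_lt hy : y ∈ SOC d)) hopen

lemma SOC_add {d : ℕ} {x y : EuclideanSpace ℝ (Fin (d+1))} (hx : x ∈ SOC d) (hy : y ∈ SOC d) :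
    x + y ∈ SOC d := by
  have : ‖tail (x + y)‖ ≤ ‖tail x‖ + ‖tail y‖ := by rw [tail_add]; exact norm_add_le _ _
  have hx' : ‖tail x‖ ≤ x 0 := hx
  have hy' : ‖tail y‖ ≤ y 0 := hy
  show ‖tail (x + y)‖ ≤ (x + y) 0
  have h0 : (x + y) 0 = x 0 + y 0 := rfl
  rw [h0]; linarith

lemma SOC_smul {d : ℕ} {t : ℝ} (ht : 0 ≤ t) {x : EuclideanSpace ℝ (Fin (d+1))} (hx : x ∈ SOC d) :
    t • x ∈ SOC d := by
  have hx' : ‖tail x‖ ≤ x 0 := hx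
  show ‖tail (t • x)‖ ≤ (t • x) 0
  have h0 : (t • x) 0 = t * x 0 := rfl
  rw [tail_smul, h0, norm_smul, Real.norm_eq_abs, abs_of_nonneg ht]
  exact mul_le_mul_of_nonneg_left hx' ht

lemma zero_mem_SOC (d : ℕ) : (0 : EuclideanSpace ℝ (Fin (d+1))) ∈ SOC d := by
  show ‖tail (0 : EuclideanSpace ℝ (Fin (d+1)))‖ ≤ (0 : EuclideanSpace ℝ (Fin (d+1))) 0
  have ht : tail (0 : EuclideanSpace ℝ (Fin (d+1))) = 0 := by ext i; rfl
  rw [ht, norm_zero]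
  rfl

lemma eq_zero_of_parts {d : ℕ} {v : EuclideanSpace ℝ (Fin (d+1))} (h0 : v 0 = 0)
    (ht : tail v = 0) : v = 0 := by
  ext i
  refine Fin.cases ?_ ?_ i
  · exact h0
  · intro j
    have := congrArg (· j) ht
    exact this


theorem subspace_meets_soc_trichotomy (d : ℕ)
    (W : Submodule ℝ (EuclideanSpace ℝ (Fin (d+1)))) :
    ((∃ x, x ∈ W ∧ x ∈ interior (SOC d)) ∧
      ¬ ({x | x ∈ W ∧ x ∈ SOC d} = ({0} : Set (EuclideanSpace ℝ (Fin (d+1))))) ∧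
      ¬ (∃ v : EuclideanSpace ℝ (Fin (d+1)), v 0 = ‖tail v‖ ∧ 0 < v 0 ∧
          {x | x ∈ W ∧ x ∈ SOC d} = {y | ∃ t : ℝ, 0 ≤ t ∧ y = t • v})) ∨
    (¬ (∃ x, x ∈ W ∧ x ∈ interior (SOC d)) ∧
      {x | x ∈ W ∧ x ∈ SOC d} = ({0} : Set (EuclideanSpace ℝ (Fin (d+1)))) ∧
      ¬ (∃ v : EuclideanSpace ℝ (Fin (d+1)), v 0 = ‖tail v‖ ∧ 0 < v 0 ∧
          {x | x ∈ W ∧ x ∈ SOC d} = {y | ∃ t : ℝ, 0 ≤ t ∧ y = t • v})) ∨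
    (¬ (∃ x, x ∈ W ∧ x ∈ interior (SOC d)) ∧
      ¬ ({x | x ∈ W ∧ x ∈ SOC d} = ({0} : Set (EuclideanSpace ℝ (Fin (d+1))))) ∧
      (∃ v : EuclideanSpace ℝ (Fin (d+1)), v 0 = ‖tail v‖ ∧ 0 < v 0 ∧
          {x | x ∈ W ∧ x ∈ SOC d} = {y | ∃ t : ℝ, 0 ≤ t ∧ y = t • v})) := by
  
  by_cases hA : ∃ x, x ∈ W ∧ x ∈ interior (SOC d)
  · left
    obtain ⟨x, hxW, hxi⟩ := hA
    have hxlt : ‖tail x‖ < x 0 := by rw [interior_SOC] at hxi; exact hxi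
    have hx0 : 0 < x 0 := lt_of_le_of_lt (norm_nonneg _) hxlt
    have hxS : x ∈ SOC d := le_of_lt hxlt
    have hxne : x ≠ 0 := by
      intro h
      rw [h] at hx0
      exact lt_irrefl 0 hx0
    refine ⟨⟨x, hxW, hxi⟩, ?_, ?_⟩
    · intro hEq
      have hx' : x ∈ ({0} : Set (EuclideanSpace ℝ (Fin (d+1)))) := hEq ▸ ⟨hxW, hxS⟩
      exact hxne hx'
    · rintro ⟨v, hv0, hvpos, hEq⟩
      have hxmem : x ∈ {y : EuclideanSpace ℝ (Fin (d+1)) | ∃ t : ℝ, 0 ≤ t ∧ y = t • v} :=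
        hEq ▸ ⟨hxW, hxS⟩
      obtain ⟨t, htnn, hxt⟩ := hxmem
      have heq : ‖tail x‖ = x 0 := by
        rw [hxt, tail_smul, norm_smul, Real.norm_eq_abs, abs_of_nonneg htnn, ← hv0]
        rfl
      linarith
  · have hbd : ∀ x, x ∈ W → x ∈ SOC d → ‖tail x‖ = x 0 := by
      intro x hxW hxS
      have hxS' : ‖tail x‖ ≤ x 0 := hxS
      rcases lt_or_eq_of_le hxS' with h | h
      · exact absurd ⟨x, hxW, by rw [interior_SOC]; exact h⟩ hA
      · exact h
    have hpos : ∀ x, x ∈ W → x ∈ SOC d → x ≠ 0 → 0 < x 0 := by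
      intro x hxW hxS hne
      rcases lt_or_eq_of_le (le_trans (norm_nonneg (tail x)) hxS) with h | h
      · exact h
      · exfalso
        apply hne
        apply eq_zero_of_parts h.symm
        have h2 := hbd x hxW hxS
        rw [← h] at h2
        exact norm_eq_zero.1 h2
    by_cases hB : ({x | x ∈ W ∧ x ∈ SOC d} : Set (EuclideanSpace ℝ (Fin (d+1)))) = {0}
    · refine Or.inr (Or.inl ⟨hA, hB, ?_⟩)
      rintro ⟨v, hv0, hvpos, hEq⟩
      have hv : v ∈ {y : EuclideanSpace ℝ (Fin (d+1)) | ∃ t : ℝ, 0 ≤ t ∧ y = t • v} :=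
        ⟨1, zero_le_one, (one_smul ℝ v).symm⟩
      rw [← hEq, hB] at hv
      rw [Set.mem_singleton_iff.1 hv] at hvpos
      exact lt_irrefl 0 hvpos
    · refine Or.inr (Or.inr ⟨hA, hB, ?_⟩)
      have hex : ∃ v, v ∈ W ∧ v ∈ SOC d ∧ v ≠ 0 := by
        by_contra h
        push_neg at h
        apply hB
        apply Set.eq_singleton_iff_unique_mem.2
        exact ⟨⟨W.zero_mem, zero_mem_SOC d⟩, fun y hy => h y hy.1 hy.2⟩
      obtain ⟨v, hvW, hvS, hvne⟩ := hex
      have hv0pos : 0 < v 0 := hpos v hvW hvS hvne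
      have hvbd : ‖tail v‖ = v 0 := hbd v hvW hvS
      refine ⟨v, hvbd.symm, hv0pos, ?_⟩
      apply Set.Subset.antisymm
      · rintro x ⟨hxW, hxS⟩
        by_cases hxz : x = 0
        · exact ⟨0, le_refl 0, by rw [hxz, zero_smul]⟩
        have hx0pos : 0 < x 0 := hpos x hxW hxS hxz
        have hxbd : ‖tail x‖ = x 0 := hbd x hxW hxS
        have hsW : x + v ∈ W := W.add_mem hxW hvW
        have hsS : x + v ∈ SOC d := SOC_add hxS hvS
        have hsbd : ‖tail x + tail v‖ = ‖tail x‖ + ‖tail v‖ := by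
          have h1 := hbd (x + v) hsW hsS
          rw [tail_add] at h1
          have h2 : (x + v) 0 = x 0 + v 0 := rfl
          rw [h1, h2, hxbd, hvbd]
        have hinner : ⟪tail x, tail v⟫ = ‖tail x‖ * ‖tail v‖ := by
          have h1 := norm_add_sq_real (tail x) (tail v)
          rw [hsbd] at h1
          nlinarith [h1]
        have hpar : ‖tail v‖ • tail x = ‖tail x‖ • tail v :=
          inner_eq_norm_mul_iff_real.1 hinner
        refine ⟨x 0 / v 0, le_of_lt (div_pos hx0pos hv0pos), ?_⟩
        ext i
        refine Fin.cases ?_ ?_ i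
        · have h2 : ((x 0 / v 0) • v) 0 = (x 0 / v 0) * v 0 := rfl
          rw [h2]
          field_simp
        · intro j
          have h3 := congrArg (· j) hpar
          have h4 : (‖tail v‖ • tail x) j = ‖tail v‖ * x j.succ := rfl
          have h5 : (‖tail x‖ • tail v) j = ‖tail x‖ * v j.succ := rfl
          rw [h4, h5, hxbd, hvbd] at h3
          have h6 : ((x 0 / v 0) • v) j.succ = (x 0 / v 0) * v j.succ := rfl
          rw [h6]
          field_simp
          linarith [h3]
      · rintro y ⟨t, htnn, rfl⟩
        exact ⟨W.smul_mem t hvW, SOC_smul htnn hvS⟩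
end
end
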